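/- arXiv:1005.3530 — 6 statements merged into one kernel-verified Lean document; each statement's English description precedes it below -/
import Mathlib

section
/- Let κ be an infinite cardinal and let K be a totally disconnected compact Hausdorff space of weight at most κ such that every compact Hausdorff space of weight at most κ is a continuous image of K. Then every real Banach space of density character at most κ admits a linear isometric embedding into the Banach space C(K, ℝ) of continuous real-valued functions on K with the supremum norm. -/
open Cardinal

/-- The weight of a topological space: the smallest cardinality of a base for its topology. -/
noncomputable def topWeight (X : Type u) [TopologicalSpace X] : Cardinal.{u} :=
  sInf { c | ∃ B : Set (Set X), TopologicalSpace.IsTopologicalBasis B ∧ #B = c }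

/-- The density character of a topological space: the smallest cardinality of a dense subset. -/
noncomputable def densityChar (X : Type u) [TopologicalSpace X] : Cardinal.{u} :=
  sInf { c | ∃ s : Set X, Dense s ∧ #s = c }

/-!
The closed unit ball `B` of the dual of `X` is weak-* compact (Banach–Alaoglu), and
evaluation at the points of a dense subset `s` of `X` embeds it into `ℝ^s`, so its weight is
at most `max #s ℵ₀ ≤ κ`. A continuous surjection `f : K → B` then yields the linear map
`x ↦ (k ↦ f k x)` into `C(K, ℝ)`; it is isometric because the functionals in `B` are bounded
by `‖x‖` at `x` and, by Hahn–Banach, one of them attains it.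
-/

open TopologicalSpace Topology

theorem exists_dense_mk_eq_densityChar (X : Type u) [TopologicalSpace X] :
    ∃ s : Set X, Dense s ∧ #s = densityChar X :=
  csInf_mem (s := {c | ∃ s : Set X, Dense s ∧ #s = c}) ⟨_, Set.univ, dense_univ, rfl⟩

theorem topWeight_le_mk_of_isTopologicalBasis {X : Type u} [TopologicalSpace X]
    {B : Set (Set X)} (hB : IsTopologicalBasis B) : topWeight X ≤ #B :=
  csInf_le' ⟨B, hB, rfl⟩

theorem topWeight_le_of_eq_generateFrom {X : Type u} [t : TopologicalSpace X] {S : Set (Set X)}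
    (h : t = generateFrom S) : topWeight X ≤ max #S ℵ₀ := by
  have hsub : (fun f => ⋂₀ f) '' {f : Set (Set X) | f.Finite ∧ f ⊆ S} ⊆
      Set.range fun F : Finset S => ⋂₀ (Subtype.val '' (F : Set S)) := by
    rintro _ ⟨f, ⟨hf, hfS⟩, rfl⟩
    refine ⟨(hf.preimage Subtype.val_injective.injOn).toFinset, ?_⟩
    simp only [Set.Finite.coe_toFinset, Subtype.image_preimage_coe, Set.inter_eq_right.2 hfS]
  calc topWeight X ≤ #((fun f => ⋂₀ f) '' {f : Set (Set X) | f.Finite ∧ f ⊆ S}) :=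
        topWeight_le_mk_of_isTopologicalBasis (isTopologicalBasis_of_subbasis h)
    _ ≤ #(Finset S) := (mk_le_mk_of_subset hsub).trans mk_range_le
    _ ≤ #(List S) := mk_le_of_surjective List.toFinset_surjective
    _ ≤ max #S ℵ₀ := (mk_list_le_max S).trans_eq (max_comm _ _)

theorem topWeight_le_of_isInducing_pi {L ι : Type u} {Y : Type v} [TopologicalSpace L]
    [TopologicalSpace Y] [SecondCountableTopology Y] {e : L → ι → Y} (he : IsInducing e) :
    topWeight L ≤ max #ι ℵ₀ := by
  set S : Set (Set L) := ⋃ i, Set.preimage (fun x => e x i) '' countableBasis Y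
  have hS : ‹TopologicalSpace L› = generateFrom S := by
    rw [he.eq_induced, Pi.topologicalSpace, induced_iInf, generateFrom_iUnion]
    refine iInf_congr fun i => ?_
    rw [induced_compose, ← induced_generateFrom_eq,
      ← (isBasis_countableBasis Y).eq_generateFrom]
    rfl
  have hcard : #S ≤ #ι * ℵ₀ :=
    (mk_iUnion_le _).trans <| mul_le_mul_right (ciSup_le' fun i =>
      le_aleph0_iff_set_countable.2 ((countable_countableBasis Y).image _)) _
  refine (topWeight_le_of_eq_generateFrom hS).trans (max_le ?_ (le_max_right _ _))
  calc #S ≤ #ι * ℵ₀ := hcard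
    _ ≤ max #ι ℵ₀ * max #ι ℵ₀ := mul_le_mul' (le_max_left _ _) (le_max_right _ _)
    _ = max #ι ℵ₀ := mul_eq_self (le_max_right _ _)

theorem topWeight_le_of_isCompact_weakDual {X : Type u} [AddCommGroup X] [TopologicalSpace X]
    [Module ℝ X] {L : Set (WeakDual ℝ X)} (hL : IsCompact L) :
    topWeight L ≤ max (densityChar X) ℵ₀ := by
  obtain ⟨s, hs, hsc⟩ := exists_dense_mk_eq_densityChar X
  have : CompactSpace L := isCompact_iff_compactSpace.mp hL
  let e : L → s → ℝ := fun φ x => φ.1 x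
  have he_cont : Continuous e :=
    continuous_pi fun x => (WeakDual.eval_continuous x.1).comp continuous_subtype_val
  have he_inj : Function.Injective e := fun φ ψ h =>
    Subtype.ext <| DFunLike.coe_injective <|
      Continuous.ext_on hs φ.1.continuous ψ.1.continuous fun x hx => congrFun h ⟨x, hx⟩
  rw [← hsc]
  exact topWeight_le_of_isInducing_pi (he_cont.isClosedEmbedding he_inj).isInducing

section evalAlong

variable {𝕜 X K : Type*} [RCLike 𝕜] [NormedAddCommGroup X] [NormedSpace 𝕜 X]
  [TopologicalSpace K]

noncomputable def WeakDual.evalAlong (f : K → WeakDual 𝕜 X) (hf : Continuous f) :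
    X →ₗ[𝕜] C(K, 𝕜) where
  toFun x := ⟨fun k => f k x, (WeakDual.eval_continuous x).comp hf⟩
  map_add' x y := ContinuousMap.ext fun k => map_add (f k) x y
  map_smul' c x := ContinuousMap.ext fun k => map_smul (f k) c x

theorem WeakDual.norm_evalAlong [CompactSpace K] {f : K → WeakDual 𝕜 X} (hf : Continuous f)
    (hrange : Set.range f = toStrongDual ⁻¹' Metric.closedBall 0 1) (x : X) :
    ‖evalAlong f hf x‖ = ‖x‖ := by
  refine le_antisymm ((ContinuousMap.norm_le _ (norm_nonneg x)).2 fun k => ?_) ?_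
  · have hk : f k ∈ toStrongDual ⁻¹' Metric.closedBall 0 1 := hrange ▸ ⟨k, rfl⟩
    simpa [evalAlong] using
      (toStrongDual (f k)).le_of_opNorm_le (mem_closedBall_zero_iff.1 hk) x
  · obtain ⟨g, hg, hgx⟩ := exists_dual_vector'' 𝕜 x
    obtain ⟨k, hk⟩ : toStrongDual.symm g ∈ Set.range f := by
      rw [hrange]; simpa using hg
    calc ‖x‖ = ‖evalAlong f hf x k‖ := by simp [evalAlong, hk, hgx]
      _ ≤ ‖evalAlong f hf x‖ := (evalAlong f hf x).norm_coe_le_norm k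

end evalAlong

theorem stmt0_general (κ : Cardinal.{u}) (hκ : ℵ₀ ≤ κ)
    (K : Type u) [TopologicalSpace K] [CompactSpace K]
    (huniv : ∀ (L : Type u) [TopologicalSpace L] [CompactSpace L] [T2Space L],
      topWeight L ≤ κ → ∃ f : K → L, Continuous f ∧ Function.Surjective f)
    (X : Type u) [NormedAddCommGroup X] [NormedSpace ℝ X]
    (hX : densityChar X ≤ κ) :
    Nonempty (X →ₗᵢ[ℝ] C(K, ℝ)) := by
  set B := WeakDual.toStrongDual ⁻¹' Metric.closedBall (0 : StrongDual ℝ X) 1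
  have hB : IsCompact B := WeakDual.isCompact_closedBall 0 1
  have : CompactSpace B := isCompact_iff_compactSpace.mp hB
  obtain ⟨f, hf, hfs⟩ := huniv B ((topWeight_le_of_isCompact_weakDual hB).trans (max_le hX hκ))
  have hrange : Set.range (Subtype.val ∘ f) = B := by rw [hfs.range_comp, Subtype.range_coe]
  exact ⟨⟨WeakDual.evalAlong _ (continuous_subtype_val.comp hf),
    WeakDual.norm_evalAlong _ hrange⟩⟩

/-- If `K` is a totally disconnected compact Hausdorff space of weight at most `κ` which maps
continuously onto every compact Hausdorff space of weight at most `κ`, then every real Banach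
space of density character at most `κ` embeds linearly isometrically into `C(K, ℝ)`. -/
theorem stmt0 (κ : Cardinal.{u}) (hκ : ℵ₀ ≤ κ)
    (K : Type u) [TopologicalSpace K] [CompactSpace K] [T2Space K]
    [TotallyDisconnectedSpace K] (hK : topWeight K ≤ κ)
    (huniv : ∀ (L : Type u) [TopologicalSpace L] [CompactSpace L] [T2Space L],
      topWeight L ≤ κ → ∃ f : K → L, Continuous f ∧ Function.Surjective f)
    (X : Type u) [NormedAddCommGroup X] [NormedSpace ℝ X] [CompleteSpace X]
    (hX : densityChar X ≤ κ) :
    Nonempty (X →ₗᵢ[ℝ] C(K, ℝ)) :=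
  stmt0_general κ hκ K huniv X hX
end

section
/- The partial order P1 satisfies the countable chain condition: every antichain in P1 is countable. -/
open Cardinal

/-- A condition in the partial order `P1`: a function with finite domain `dom ⊆ ω₂` such that
`val ξ` is a finite subset of `Y ξ` for every `ξ ∈ dom` (values outside `dom` are irrelevant). -/
structure P1Cond (O1 O2 : Type*) (Y : O2 → Set O1) where
  dom : Finset O2
  val : O2 → Finset O1
  val_subset : ∀ ξ ∈ dom, ↑(val ξ) ⊆ Y ξ

/-- The order on `P1`: `f ≤ g` iff `dom g ⊆ dom f`, `g ξ ⊆ f ξ` for `ξ ∈ dom g`, and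
`f ξ ∩ f η = g ξ ∩ g η` for all distinct `ξ, η ∈ dom g`. -/
def P1Le {O1 O2 : Type*} {Y : O2 → Set O1} (f g : P1Cond O1 O2 Y) : Prop :=
  g.dom ⊆ f.dom ∧ (∀ ξ ∈ g.dom, g.val ξ ⊆ f.val ξ) ∧
    ∀ ξ ∈ g.dom, ∀ η ∈ g.dom, ξ ≠ η →
      (↑(f.val ξ) ∩ ↑(f.val η) : Set O1) = (↑(g.val ξ) ∩ ↑(g.val η) : Set O1)

section DeltaSystem

variable {α β : Type*}

lemma exists_uncountable_fiber {γ : Type*} [Countable γ] {S : Set α} (hS : ¬ S.Countable)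
    (F : α → γ) : ∃ c, ¬ {a | a ∈ S ∧ F a = c}.Countable := by
  by_contra h
  push_neg at h
  refine hS (Set.Countable.mono (fun a ha => ?_) (Set.countable_iUnion h))
  exact Set.mem_iUnion.2 ⟨F a, ha, rfl⟩

lemma delta_aux (n : ℕ) : ∀ {α β : Type*} [DecidableEq β] (S : Set α) (s : α → Finset β), ¬ S.Countable →
    (∀ f ∈ S, (s f).card = n) →
    ∃ T ⊆ S, ¬ T.Countable ∧ ∃ r : Finset β,
      ∀ f ∈ T, ∀ g ∈ T, f ≠ g → s f ∩ s g = r := by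
  induction n with
  | zero =>
    intro α β _ S s hS hcard
    refine ⟨S, subset_rfl, hS, ∅, fun f hf g hg _ => ?_⟩
    rw [Finset.card_eq_zero.mp (hcard f hf)]
    simp
  | succ n ih =>
    intro α β _ S s hS hcard
    classical
    by_cases hx : ∃ x : β, ¬ {f | f ∈ S ∧ x ∈ s f}.Countable
    · obtain ⟨x, hx⟩ := hx
      set S₁ : Set α := {f | f ∈ S ∧ x ∈ s f} with hS₁
      have hcard' : ∀ f ∈ S₁, ((s f).erase x).card = n := by
        intro f hf
        rw [Finset.card_erase_of_mem hf.2, hcard f hf.1]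
        rfl
      obtain ⟨T, hTS₁, hT, r, hr⟩ := ih S₁ (fun f => (s f).erase x) hx hcard'
      refine ⟨T, fun f hf => (hTS₁ hf).1, hT, insert x r, ?_⟩
      intro f hf g hg hfg
      have hxf : x ∈ s f := (hTS₁ hf).2
      have hxg : x ∈ s g := (hTS₁ hg).2
      have h1 := hr f hf g hg hfg
      ext a
      by_cases hax : a = x
      · subst hax; simp [hxf, hxg]
      · have : a ∈ (s f).erase x ∩ (s g).erase x ↔ a ∈ r := by rw [h1]
        simp only [Finset.mem_inter, Finset.mem_erase, hax, ne_eq, not_false_iff,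
          true_and, Finset.mem_insert] at this ⊢
        tauto
    · push_neg at hx
      set J : Set (Set α) :=
        {m | m ⊆ S ∧ ∀ f ∈ m, ∀ g ∈ m, f ≠ g → s f ∩ s g = ∅} with hJ
      have hub : ∀ c ⊆ J, IsChain (· ⊆ ·) c → ∃ ub ∈ J, ∀ t ∈ c, t ⊆ ub := by
        intro c hcJ hchain
        refine ⟨⋃₀ c, ⟨Set.sUnion_subset fun t ht => (hcJ ht).1, ?_⟩,
          fun t ht => Set.subset_sUnion_of_mem ht⟩
        intro f hf g hg hfg
        obtain ⟨t1, ht1, hft⟩ := hf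
        obtain ⟨t2, ht2, hgt⟩ := hg
        rcases eq_or_ne t1 t2 with rfl | hne
        · exact (hcJ ht1).2 f hft g hgt hfg
        · rcases hchain ht1 ht2 hne with h | h
          · exact (hcJ ht2).2 f (h hft) g hgt hfg
          · exact (hcJ ht1).2 f hft g (h hgt) hfg
      obtain ⟨m, hm⟩ := zorn_subset J hub
      refine ⟨m, hm.1.1, fun hmc => ?_, ∅, hm.1.2⟩
      ·
        
        set U : Set β := ⋃ f ∈ m, ↑(s f) with hU
        have hUc : U.Countable := hmc.biUnion fun f _ => (s f).countable_toSet
        have hstep : S \ m ⊆ ⋃ x ∈ U, {f | f ∈ S ∧ x ∈ s f} := by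
          intro f hf
          have hins : insert f m ∉ J := by
            intro hmem
            exact hf.2 (hm.2 hmem (Set.subset_insert _ _) (Set.mem_insert f m))
          have hnot : ¬ ∀ a ∈ insert f m, ∀ b ∈ insert f m, a ≠ b → s a ∩ s b = ∅ :=
            fun hp => hins ⟨Set.insert_subset hf.1 hm.1.1, hp⟩
          push_neg at hnot
          obtain ⟨a, ha, b, hb, hab, hne⟩ := hnot
          -- extract some g ∈ m with s f ∩ s g ≠ ∅
          have : ∃ g ∈ m, (s f ∩ s g).Nonempty := by
            rcases Set.mem_insert_iff.1 ha with rfl | ham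
            · rcases Set.mem_insert_iff.1 hb with rfl | hbm
              · exact absurd rfl hab
              · exact ⟨b, hbm, hne⟩
            · rcases Set.mem_insert_iff.1 hb with rfl | hbm
              · refine ⟨a, ham, ?_⟩
                rwa [Finset.inter_comm]
              · exact absurd (hm.1.2 a ham b hbm hab) hne.ne_empty
          obtain ⟨g, hgm, z, hz⟩ := this
          rw [Finset.mem_inter] at hz
          refine Set.mem_biUnion ?_ ⟨hf.1, hz.1⟩
          exact Set.mem_biUnion hgm (Finset.mem_coe.2 hz.2)
        have : S.Countable := by
          have h2 : (⋃ x ∈ U, {f | f ∈ S ∧ x ∈ s f}).Countable :=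
            hUc.biUnion fun x _ => hx x
          refine Set.Countable.mono (fun a ha => ?_) (hmc.union h2)
          by_cases ham : a ∈ m
          · exact Or.inl ham
          · exact Or.inr (hstep ⟨ha, ham⟩)
        exact hS this

lemma delta_system [DecidableEq β] (S : Set α) (hS : ¬ S.Countable) (s : α → Finset β) :
    ∃ T ⊆ S, ¬ T.Countable ∧ ∃ r : Finset β,
      ∀ f ∈ T, ∀ g ∈ T, f ≠ g → s f ∩ s g = r := by
  obtain ⟨n, hn⟩ := exists_uncountable_fiber hS (fun f => (s f).card)
  obtain ⟨T, hT1, hT2, r, hr⟩ := delta_aux n _ s hn (fun f hf => hf.2)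
  exact ⟨T, fun f hf => (hT1 hf).1, hT2, r, hr⟩

lemma countable_finset_subtype {D : Set β} (hD : D.Countable) :
    Countable {t : Finset β // ↑t ⊆ D} := by
  classical
  haveI := hD.to_subtype
  refine Function.Injective.countable
    (f := fun t : {t : Finset β // ↑t ⊆ D} => t.1.subtype (· ∈ D)) ?_
  intro t1 t2 h
  have h1 := Finset.subtype_map_of_mem (s := t1.1) (p := (· ∈ D))
    (fun x hx => t1.2 (Finset.mem_coe.2 hx))
  have h2 := Finset.subtype_map_of_mem (s := t2.1) (p := (· ∈ D))
    (fun x hx => t2.2 (Finset.mem_coe.2 hx))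
  apply Subtype.ext
  rw [← h1, ← h2]
  exact congrArg _ h

end DeltaSystem

section Main

variable {O1 O2 : Type*}

lemma key_mem (Y : O2 → Set O1) (f g : P1Cond O1 O2 Y) (R : Finset O2) (D : Set O1)
    (hdom : ∀ ξ, ξ ∈ f.dom → ξ ∈ g.dom → ξ ∈ R)
    (hYD : ∀ ξ ∈ R, ∀ η ∈ R, ξ ≠ η → ∀ x, x ∈ Y ξ → x ∈ Y η → x ∈ D)
    (hrD : ∀ x : O1, (∃ ζ ∈ f.dom, x ∈ f.val ζ) → (∃ ζ ∈ g.dom, x ∈ g.val ζ) → x ∈ D)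
    (hvD : ∀ ξ ∈ R, ∀ x : O1, x ∈ D → x ∈ g.val ξ → x ∈ f.val ξ)
    {ξ η : O2} (hξ : ξ ∈ f.dom) (hη : η ∈ f.dom) (hne : ξ ≠ η) {x : O1}
    (h1 : x ∈ f.val ξ ∨ (ξ ∈ g.dom ∧ x ∈ g.val ξ))
    (h2 : x ∈ f.val η ∨ (η ∈ g.dom ∧ x ∈ g.val η)) : x ∈ f.val ξ := by
  rcases h1 with h1 | ⟨hξg, h1⟩
  · exact h1
  have hξR : ξ ∈ R := hdom ξ hξ hξg
  have hxD : x ∈ D := by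
    rcases h2 with h2 | ⟨hηg, h2⟩
    · exact hrD x ⟨η, hη, h2⟩ ⟨ξ, hξg, h1⟩
    · exact hYD ξ hξR η (hdom η hη hηg) hne x (g.val_subset ξ hξg (Finset.mem_coe.2 h1))
        (g.val_subset η hηg (Finset.mem_coe.2 h2))
  exact hvD ξ hξR x hxD h1

end Main

theorem P1_ccc {O1 O2 : Type*} (Y : O2 → Set O1)
    (hYcap : ∀ ξ η, ξ ≠ η → (Y ξ ∩ Y η).Countable)
    (A : Set (P1Cond O1 O2 Y))
    (hA : ∀ f ∈ A, ∀ g ∈ A, f ≠ g → ¬ ∃ h, P1Le h f ∧ P1Le h g) :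
    A.Countable := by
  classical
  by_contra hA'
  -- Step 1: Δ-system on the domains
  obtain ⟨B1, hB1A, hB1c, R, hR⟩ := delta_system A hA' (fun f => f.dom)
  -- Step 2: Δ-system on the unions of values
  set u : P1Cond O1 O2 Y → Finset O1 := fun f => f.dom.biUnion f.val with hu_def
  obtain ⟨B2, hB2B1, hB2c, r, hr⟩ := delta_system B1 hB1c u
  -- The countable set D
  set C : Set O1 := ⋃ ξ ∈ (R : Set O2), ⋃ η ∈ (R : Set O2),
    {x | ξ ≠ η ∧ x ∈ Y ξ ∧ x ∈ Y η} with hC_def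
  have hCc : C.Countable := by
    refine R.countable_toSet.biUnion fun ξ _ => R.countable_toSet.biUnion fun η _ => ?_
    rcases eq_or_ne ξ η with rfl | hne
    · have : {x | ξ ≠ ξ ∧ x ∈ Y ξ ∧ x ∈ Y ξ} = (∅ : Set O1) := by
        ext x; simp
      rw [this]; exact Set.countable_empty
    · refine Set.Countable.mono ?_ (hYcap ξ η hne)
      rintro x ⟨-, h1, h2⟩
      exact ⟨h1, h2⟩
  set D : Set O1 := C ∪ ↑r with hD_def
  have hDc : D.Countable := hCc.union r.countable_toSet
  -- Step 3: pigeonhole on the traces of values on D over the root R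
  haveI : Countable {t : Finset O1 // ↑t ⊆ D} := countable_finset_subtype hDc
  set F : P1Cond O1 O2 Y → (↥R → {t : Finset O1 // ↑t ⊆ D}) := fun f ξ =>
    ⟨(f.val ξ.1).filter (· ∈ D), fun x hx => (Finset.mem_filter.1 (Finset.mem_coe.1 hx)).2⟩
    with hF_def
  obtain ⟨v, hv⟩ := exists_uncountable_fiber hB2c F
  set B3 : Set (P1Cond O1 O2 Y) := {f | f ∈ B2 ∧ F f = v} with hB3_def
  -- pick two distinct elements of B3
  have hB3nt : B3.Nontrivial := Set.not_subsingleton_iff.1 fun h => hv h.countable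
  obtain ⟨f, hf3, g, hg3, hfg⟩ := hB3nt
  have hfB2 : f ∈ B2 := hf3.1
  have hgB2 : g ∈ B2 := hg3.1
  have hfB1 : f ∈ B1 := hB2B1 hfB2
  have hgB1 : g ∈ B1 := hB2B1 hgB2
  -- core facts
  have hdomR : f.dom ∩ g.dom = R := hR f hfB1 g hgB1 hfg
  have hur : u f ∩ u g = r := hr f hfB2 g hgB2 hfg
  have hdom : ∀ ξ, ξ ∈ f.dom → ξ ∈ g.dom → ξ ∈ R := by
    intro ξ h1 h2; rw [← hdomR]; exact Finset.mem_inter.2 ⟨h1, h2⟩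
  have hdom' : ∀ ξ, ξ ∈ g.dom → ξ ∈ f.dom → ξ ∈ R := fun ξ h1 h2 => hdom ξ h2 h1
  have hYD : ∀ ξ ∈ R, ∀ η ∈ R, ξ ≠ η → ∀ x, x ∈ Y ξ → x ∈ Y η → x ∈ D := by
    intro ξ hξ η hη hne x hx1 hx2
    refine Or.inl ?_
    refine Set.mem_biUnion (Finset.mem_coe.2 hξ) ?_
    exact Set.mem_biUnion (Finset.mem_coe.2 hη) ⟨hne, hx1, hx2⟩
  have hYD' : ∀ ξ ∈ R, ∀ η ∈ R, ξ ≠ η → ∀ x, x ∈ Y ξ → x ∈ Y η → x ∈ D := hYD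
  have hrD : ∀ x : O1, (∃ ζ ∈ f.dom, x ∈ f.val ζ) → (∃ ζ ∈ g.dom, x ∈ g.val ζ) → x ∈ D := by
    intro x ⟨ζ1, h1, h1'⟩ ⟨ζ2, h2, h2'⟩
    have hxf : x ∈ u f := Finset.mem_biUnion.2 ⟨ζ1, h1, h1'⟩
    have hxg : x ∈ u g := Finset.mem_biUnion.2 ⟨ζ2, h2, h2'⟩
    have : x ∈ r := by rw [← hur]; exact Finset.mem_inter.2 ⟨hxf, hxg⟩
    exact Or.inr (Finset.mem_coe.2 this)
  have hrD' : ∀ x : O1, (∃ ζ ∈ g.dom, x ∈ g.val ζ) → (∃ ζ ∈ f.dom, x ∈ f.val ζ) → x ∈ D :=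
    fun x h1 h2 => hrD x h2 h1
  have hFfg : F f = F g := by rw [hf3.2, hg3.2]
  have hvD : ∀ ξ ∈ R, ∀ x : O1, x ∈ D → (x ∈ f.val ξ ↔ x ∈ g.val ξ) := by
    intro ξ hξ x hxD
    have := congrFun hFfg ⟨ξ, hξ⟩
    have h2 : (f.val ξ).filter (· ∈ D) = (g.val ξ).filter (· ∈ D) :=
      congrArg Subtype.val this
    constructor
    · intro hx
      have : x ∈ (f.val ξ).filter (· ∈ D) := Finset.mem_filter.2 ⟨hx, hxD⟩
      rw [h2] at this
      exact (Finset.mem_filter.1 this).1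
    · intro hx
      have : x ∈ (g.val ξ).filter (· ∈ D) := Finset.mem_filter.2 ⟨hx, hxD⟩
      rw [← h2] at this
      exact (Finset.mem_filter.1 this).1
  have hvD1 : ∀ ξ ∈ R, ∀ x : O1, x ∈ D → x ∈ g.val ξ → x ∈ f.val ξ :=
    fun ξ hξ x hxD hx => (hvD ξ hξ x hxD).2 hx
  have hvD2 : ∀ ξ ∈ R, ∀ x : O1, x ∈ D → x ∈ f.val ξ → x ∈ g.val ξ :=
    fun ξ hξ x hxD hx => (hvD ξ hξ x hxD).1 hx
  -- construct the common extension
  set hval : O2 → Finset O1 := fun ξ =>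
    (if ξ ∈ f.dom then f.val ξ else ∅) ∪ (if ξ ∈ g.dom then g.val ξ else ∅) with hval_def
  have hval_mem : ∀ ξ x, x ∈ hval ξ →
      (x ∈ f.val ξ ∧ ξ ∈ f.dom) ∨ (x ∈ g.val ξ ∧ ξ ∈ g.dom) := by
    intro ξ x hx
    rw [hval_def] at hx
    simp only [Finset.mem_union] at hx
    rcases hx with hx | hx
    · by_cases h : ξ ∈ f.dom
      · rw [if_pos h] at hx; exact Or.inl ⟨hx, h⟩
      · rw [if_neg h] at hx; simp at hx
    · by_cases h : ξ ∈ g.dom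
      · rw [if_pos h] at hx; exact Or.inr ⟨hx, h⟩
      · rw [if_neg h] at hx; simp at hx
  have hcond_sub : ∀ ξ ∈ f.dom ∪ g.dom, ↑(hval ξ) ⊆ Y ξ := by
    intro ξ _ x hx
    rcases hval_mem ξ x (Finset.mem_coe.1 hx) with ⟨hx, h⟩ | ⟨hx, h⟩
    · exact f.val_subset ξ h (Finset.mem_coe.2 hx)
    · exact g.val_subset ξ h (Finset.mem_coe.2 hx)
  set hcond : P1Cond O1 O2 Y := ⟨f.dom ∪ g.dom, hval, hcond_sub⟩ with hcond_def
  -- prove the two extension facts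
  have hval_f : ∀ ξ ∈ f.dom, f.val ξ ⊆ hval ξ := by
    intro ξ hξ x hx
    rw [hval_def]
    exact Finset.mem_union_left _ (by rw [if_pos hξ]; exact hx)
  have hval_g : ∀ ξ ∈ g.dom, g.val ξ ⊆ hval ξ := by
    intro ξ hξ x hx
    rw [hval_def]
    exact Finset.mem_union_right _ (by rw [if_pos hξ]; exact hx)
  have hmem_f : ∀ ξ, ξ ∈ f.dom → ∀ x, x ∈ hval ξ →
      x ∈ f.val ξ ∨ (ξ ∈ g.dom ∧ x ∈ g.val ξ) := by
    intro ξ hξ x hx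
    rcases hval_mem ξ x hx with ⟨hx, _⟩ | ⟨hx, h⟩
    · exact Or.inl hx
    · exact Or.inr ⟨h, hx⟩
  have hmem_g : ∀ ξ, ξ ∈ g.dom → ∀ x, x ∈ hval ξ →
      x ∈ g.val ξ ∨ (ξ ∈ f.dom ∧ x ∈ f.val ξ) := by
    intro ξ hξ x hx
    rcases hval_mem ξ x hx with ⟨hx, h⟩ | ⟨hx, _⟩
    · exact Or.inr ⟨h, hx⟩
    · exact Or.inl hx
  have hle_f : P1Le hcond f := by
    refine ⟨Finset.subset_union_left, fun ξ hξ => hval_f ξ hξ, ?_⟩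
    intro ξ hξ η hη hne
    apply Set.Subset.antisymm
    · rintro x ⟨hx1, hx2⟩
      have m1 := hmem_f ξ hξ x (Finset.mem_coe.1 hx1)
      have m2 := hmem_f η hη x (Finset.mem_coe.1 hx2)
      exact ⟨Finset.mem_coe.2 (key_mem Y f g R D hdom hYD hrD hvD1 hξ hη hne m1 m2),
        Finset.mem_coe.2 (key_mem Y f g R D hdom hYD hrD hvD1 hη hξ hne.symm m2 m1)⟩
    · rintro x ⟨hx1, hx2⟩
      exact ⟨Finset.mem_coe.2 (hval_f ξ hξ (Finset.mem_coe.1 hx1)),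
        Finset.mem_coe.2 (hval_f η hη (Finset.mem_coe.1 hx2))⟩
  have hle_g : P1Le hcond g := by
    refine ⟨Finset.subset_union_right, fun ξ hξ => hval_g ξ hξ, ?_⟩
    intro ξ hξ η hη hne
    apply Set.Subset.antisymm
    · rintro x ⟨hx1, hx2⟩
      have m1 := hmem_g ξ hξ x (Finset.mem_coe.1 hx1)
      have m2 := hmem_g η hη x (Finset.mem_coe.1 hx2)
      exact ⟨Finset.mem_coe.2 (key_mem Y g f R D hdom' hYD' hrD' hvD2 hξ hη hne m1 m2),
        Finset.mem_coe.2 (key_mem Y g f R D hdom' hYD' hrD' hvD2 hη hξ hne.symm m2 m1)⟩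
    · rintro x ⟨hx1, hx2⟩
      exact ⟨Finset.mem_coe.2 (hval_g ξ hξ (Finset.mem_coe.1 hx1)),
        Finset.mem_coe.2 (hval_g η hη (Finset.mem_coe.1 hx2))⟩
  exact hA f (hB1A hfB1) g (hB1A hgB1) hfg ⟨hcond, hle_f, hle_g⟩

/-- `P1` satisfies the countable chain condition: every antichain is countable. Here `ω₁` and
`ω₂` are realized as the canonical types of the ordinals `(ℵ₁).ord` and `(ℵ₂).ord`, and
`(Y ξ)` is a family of uncountable subsets of `ω₁` with pairwise countable intersections. -/
theorem stmt6
    (Y : (Cardinal.aleph 2).ord.ToType → Set (Cardinal.aleph 1).ord.ToType)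
    (hYunc : ∀ ξ, ¬ (Y ξ).Countable)
    (hYcap : ∀ ξ η, ξ ≠ η → (Y ξ ∩ Y η).Countable)
    (A : Set (P1Cond (Cardinal.aleph 1).ord.ToType (Cardinal.aleph 2).ord.ToType Y))
    (hA : ∀ f ∈ A, ∀ g ∈ A, f ≠ g → ¬ ∃ h, P1Le h f ∧ P1Le h g) :
    A.Countable :=
  P1_ccc Y hYcap A hA
end

section
/- The partial order P1 has precaliber ω2: for every family (f_α)_{α<ω2} of elements of P1 there is a set S ⊆ ω2 of cardinality ℵ2 such that the family (f_α)_{α∈S} is centered, i.e., every finite subfamily has a common lower bound in P1. -/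
/-!
By the Δ-system lemma (for the regular uncountable cardinal `ℵ₂`), `ℵ₂` of the domains
`dom (f α)` form a Δ-system with some root `R`. There are only `ℵ₁` maps from the finite set
`R` to finite subsets of `ω₁`, so `ℵ₂` of these conditions moreover agree on `R`. Finitely many
of them then agree wherever their domains overlap, and their union is a condition below each
of them: inside a single domain it changes no value, so the intersections the order
controls are untouched.
-/

open Cardinal

open Set

universe u v

namespace Cardinal

theorem exists_mk_fiber_eq_of_isRegular {β : Type u} {α : Type v} {κ : Cardinal.{u}}
    (hκ : κ.IsRegular) {s : Set β} (hs : #s = κ) (g : β → α) (hα : lift.{u} #α < lift.{v} κ) :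
    ∃ a, #{x ∈ s | g x = a} = κ := by
  by_contra! hne
  have hlt : ∀ a, #{x ∈ s | g x = a} < κ := fun a =>
    ((mk_le_mk_of_subset fun _ hx => hx.1).trans hs.le).lt_of_ne (hne a)
  have hcover : s ⊆ ⋃ a, {x ∈ s | g x = a} := fun x hx => mem_iUnion.2 ⟨g x, hx, rfl⟩
  refine (lift_le.{v}.2 (hs ▸ mk_le_mk_of_subset hcover)).not_gt ?_
  refine (mk_iUnion_le_lift _).trans_lt (mul_lt_of_lt hκ.lift.aleph0_le hα ?_)
  refine lift_iSup_lt_of_lt_cof_ord ?_ fun a => lift_lt.2 (hlt a)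
  rw [lift_lift, hκ.lift.cof_ord]
  rwa [lift_umax.{v, u}]

theorem mk_biUnion_finset_lt {ι : Type u} {O : Type v} {κ : Cardinal.{u}} (hκ : ℵ₀ ≤ κ)
    (s : Finset O) {t : O → Set ι} (ht : ∀ b ∈ s, #(t b) < κ) : #(⋃ b ∈ s, t b) < κ := by
  classical
  induction s using Finset.induction_on with
  | empty => simpa using aleph0_pos.trans_le hκ
  | insert a s _ ih =>
    rw [Finset.set_biUnion_insert]
    exact (mk_union_le _ _).trans_lt (add_lt_of_lt hκ (ht a (Finset.mem_insert_self a s))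
      (ih fun b hb => ht b (Finset.mem_insert_of_mem hb)))

theorem mk_pi_finset_le {σ : Type u} {α : Type v} [Finite σ] [Infinite α] :
    #(σ → Finset α) ≤ lift.{u} #α := by
  have := Fintype.ofFinite σ
  rw [← mk_finset_of_infinite α, mk_arrow, mk_fintype σ, lift_natCast]
  exact power_nat_le (by simp)

end Cardinal

section DeltaSystem

variable {ι : Type u} {O : Type v} {κ : Cardinal.{u}}

theorem exists_pairwiseDisjoint_of_forall_mk_lt (hκ : κ.IsRegular) {S : Set ι} (hS : #S = κ)
    (A : ι → Finset O) (hsmall : ∀ b, #{α ∈ S | b ∈ A α} < κ) :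
    ∃ T ⊆ S, #T = κ ∧ T.PairwiseDisjoint A := by
  obtain ⟨m, -, ⟨hmS, hm⟩, hmax⟩ := zorn_subset_nonempty {T | T ⊆ S ∧ T.PairwiseDisjoint A}
    (fun c hc hchain _ => ⟨⋃₀ c, ⟨sUnion_subset fun T hT => (hc hT).1,
      (pairwise_sUnion hchain.directedOn).2 fun T hT => (hc hT).2⟩,
      fun _ => subset_sUnion_of_mem⟩) ∅ ⟨empty_subset S, pairwiseDisjoint_empty⟩
  refine ⟨m, hmS, (hS ▸ mk_le_mk_of_subset hmS).antisymm (not_lt.1 fun hmκ => ?_), hm⟩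
  -- Fewer than `κ` indices meet some `A β` with `β ∈ m`, so some index of `S` is free to join `m`.
  set B := ⋃ β ∈ m, ⋃ b ∈ A β, {α ∈ S | b ∈ A α}
  have hB : #B < κ := (card_biUnion_lt_iff_forall_of_isRegular hκ hmκ).2 fun β _ =>
    mk_biUnion_finset_lt hκ.aleph0_le (A β) fun b _ => hsmall b
  obtain ⟨α, hαS, hαmB⟩ := not_subset.1 fun h : S ⊆ m ∪ B =>
    ((hS ▸ mk_le_mk_of_subset h).trans (mk_union_le m B)).not_gt
      (add_lt_of_lt hκ.aleph0_le hmκ hB)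
  have hαm : α ∉ m := fun h => hαmB (Or.inl h)
  have hdisj : ∀ β ∈ m, α ≠ β → Disjoint (A α) (A β) := fun β hβ _ =>
    Finset.disjoint_left.2 fun b hbα hbβ =>
      hαmB (Or.inr (mem_biUnion hβ (mem_iUnion₂.2 ⟨b, hbβ, hαS, hbα⟩)))
  exact hαm (hmax ⟨insert_subset hαS hmS, hm.insert hdisj⟩ (subset_insert α m) (mem_insert α m))

theorem exists_deltaSystem_of_card_eq [DecidableEq O] (hκ : κ.IsRegular) (n : ℕ) {S : Set ι}
    (hS : #S = κ) (A : ι → Finset O) (hA : ∀ α ∈ S, (A α).card = n) :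
    ∃ R, ∃ T ⊆ S, #T = κ ∧ T.Pairwise fun α β => A α ∩ A β = R := by
  induction n generalizing S A with
  | zero =>
    refine ⟨∅, S, subset_rfl, hS, fun α hα β _ _ => ?_⟩
    simp [Finset.card_eq_zero.1 (hA α hα)]
  | succ n ih =>
    by_cases hhub : ∃ b, #{α ∈ S | b ∈ A α} = κ
    · obtain ⟨b, hb⟩ := hhub
      obtain ⟨R, T, hTS, hT, hR⟩ := ih hb (fun α => (A α).erase b) fun α hα => by
        rw [Finset.card_erase_of_mem hα.2, hA α hα.1, Nat.add_sub_cancel]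
      refine ⟨insert b R, T, fun α hα => (hTS hα).1, hT, fun α hα β hβ hne => ?_⟩
      rw [← hR hα hβ hne, Finset.erase_inter, Finset.inter_erase, Finset.erase_idem,
        Finset.insert_erase (Finset.mem_inter.2 ⟨(hTS hα).2, (hTS hβ).2⟩)]
    · obtain ⟨T, hTS, hT, hdisj⟩ := exists_pairwiseDisjoint_of_forall_mk_lt hκ hS A fun b =>
        (hS ▸ mk_le_mk_of_subset (sep_subset S _)).lt_of_ne (not_exists.1 hhub b)
      exact ⟨∅, T, hTS, hT, fun α hα β hβ hne =>
        Finset.disjoint_iff_inter_eq_empty.1 (hdisj hα hβ hne)⟩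

theorem exists_deltaSystem [DecidableEq O] (hκ : κ.IsRegular) (hκ₀ : ℵ₀ < κ) {S : Set ι}
    (hS : #S = κ) (A : ι → Finset O) :
    ∃ R, ∃ T ⊆ S, #T = κ ∧ T.Pairwise fun α β => A α ∩ A β = R := by
  obtain ⟨n, hn⟩ := exists_mk_fiber_eq_of_isRegular hκ hS (fun α => (A α).card) (by simpa using hκ₀)
  obtain ⟨R, T, hTS, hT, hR⟩ := exists_deltaSystem_of_card_eq hκ n hn A fun α hα => hα.2
  exact ⟨R, T, hTS.trans (sep_subset S _), hT, hR⟩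

end DeltaSystem

namespace P1Cond

open Classical

variable {O1 O2 ι : Type*} {Y : O2 → Set O1}

noncomputable def amalgam (F : Finset ι) (f : ι → P1Cond O1 O2 Y) : P1Cond O1 O2 Y where
  dom := F.biUnion fun α => (f α).dom
  val ξ := {α ∈ F | ξ ∈ (f α).dom}.biUnion fun α => (f α).val ξ
  val_subset ξ _ x hx := by
    obtain ⟨α, hα, hxα⟩ := Finset.mem_biUnion.1 hx
    exact (f α).val_subset ξ (Finset.mem_filter.1 hα).2 hxα

variable {F : Finset ι} {f : ι → P1Cond O1 O2 Y}

theorem amalgam_val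
    (hagree : ∀ α ∈ F, ∀ β ∈ F, ∀ ξ ∈ (f α).dom, ξ ∈ (f β).dom → (f α).val ξ = (f β).val ξ)
    {α : ι} (hα : α ∈ F) {ξ : O2} (hξ : ξ ∈ (f α).dom) :
    (amalgam F f).val ξ = (f α).val ξ := by
  refine (Finset.biUnion_subset.2 fun β hβ => ?_).antisymm
    (Finset.subset_biUnion_of_mem (fun β => (f β).val ξ) (Finset.mem_filter.2 ⟨hα, hξ⟩))
  rw [Finset.mem_filter] at hβ
  exact (hagree β hβ.1 α hα ξ hβ.2 hξ).le

theorem amalgam_le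
    (hagree : ∀ α ∈ F, ∀ β ∈ F, ∀ ξ ∈ (f α).dom, ξ ∈ (f β).dom → (f α).val ξ = (f β).val ξ)
    {α : ι} (hα : α ∈ F) : P1Le (amalgam F f) (f α) := by
  refine ⟨Finset.subset_biUnion_of_mem (fun β => (f β).dom) hα,
    fun ξ hξ => (amalgam_val hagree hα hξ).ge, fun ξ hξ η hη _ => ?_⟩
  rw [amalgam_val hagree hα hξ, amalgam_val hagree hα hη]

end P1Cond

theorem stmt7_general
    (Y : (Cardinal.aleph 2).ord.ToType → Set (Cardinal.aleph 1).ord.ToType)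
    (f : (Cardinal.aleph 2).ord.ToType →
      P1Cond (Cardinal.aleph 1).ord.ToType (Cardinal.aleph 2).ord.ToType Y) :
    ∃ S : Set (Cardinal.aleph 2).ord.ToType, #S = Cardinal.aleph 2 ∧
      ∀ F : Finset (Cardinal.aleph 2).ord.ToType, ↑F ⊆ S →
        ∃ h, ∀ α ∈ F, P1Le h (f α) := by
  classical
  have hreg : (ℵ_ 2).IsRegular := by simpa [one_add_one_eq_two] using isRegular_aleph_add_one 1
  obtain ⟨R, T, -, hT, hΔ⟩ := exists_deltaSystem hreg (by simp) (mk_univ.trans (mk_ord_toType _))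
    fun α => (f α).dom
  have hpatterns : #(R → Finset (ℵ_ 1).ord.ToType) < ℵ_ 2 := by
    have : Infinite (ℵ_ 1).ord.ToType := infinite_iff.2 (by simp)
    exact mk_pi_finset_le.trans_lt (by simp)
  obtain ⟨v, hv⟩ := exists_mk_fiber_eq_of_isRegular hreg hT (fun α (ξ : R) => (f α).val ξ)
    (by simpa using hpatterns)
  refine ⟨_, hv, fun F hF => ⟨P1Cond.amalgam F f, fun α hα => P1Cond.amalgam_le ?_ hα⟩⟩
  intro α hα β hβ ξ hξα hξβ
  obtain rfl | hne := eq_or_ne α β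
  · rfl
  have hξR : ξ ∈ R := hΔ (hF hα).1 (hF hβ).1 hne ▸ Finset.mem_inter.2 ⟨hξα, hξβ⟩
  exact congrFun ((hF hα).2.trans (hF hβ).2.symm) ⟨ξ, hξR⟩

/-- `P1` has precaliber `ω₂`: every family of conditions indexed by `ω₂` has a subfamily indexed
by a set of cardinality `ℵ₂` which is centered, i.e., every finite subfamily has a common lower
bound in `P1`. -/
theorem stmt7
    (Y : (Cardinal.aleph 2).ord.ToType → Set (Cardinal.aleph 1).ord.ToType)
    (hYunc : ∀ ξ, ¬ (Y ξ).Countable)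
    (hYcap : ∀ ξ η, ξ ≠ η → (Y ξ ∩ Y η).Countable)
    (f : (Cardinal.aleph 2).ord.ToType →
      P1Cond (Cardinal.aleph 1).ord.ToType (Cardinal.aleph 2).ord.ToType Y) :
    ∃ S : Set (Cardinal.aleph 2).ord.ToType, #S = Cardinal.aleph 2 ∧
      ∀ F : Finset (Cardinal.aleph 2).ord.ToType, ↑F ⊆ S →
        ∃ h, ∀ α ∈ F, P1Le h (f α) :=
  stmt7_general Y f
end

section
/- Assume the continuum hypothesis (2^{ℵ0} = ℵ1). Then the partial order P2 satisfies the ω2-chain condition: every antichain in P2 has cardinality at most ℵ1. -/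
open Cardinal

/-!
Write `𝔠 = 2 ^ ℵ₀`; CH is used only to identify `𝔠` with `ℵ₁`, so the point is that countable
partial functions satisfy the `𝔠⁺`-chain condition. Given more than `𝔠` conditions, build an
`ω₁`-chain of sets of coordinates, each of size at most `𝔠` (as `𝔠 ^ ℵ₀ = 𝔠`): at every stage, each
countable pattern on the current set that some condition realises is realised by a chosen witness,
whose domain goes into the later stages. Only `𝔠` witnesses are chosen, so some condition `p` is
not among them. The domain of `p` meets the union of the chain in a countable set, which by the
regularity of `ω₁` lies in a single stage; the witness for the restriction of `p` to that stage
agrees with `p` on their common domain, so the two are compatible.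
-/

/-- A condition in the partial order `P2`: a partial function from `ω₃ × ω₁` to `{0,1}` with
countable domain, represented as a total function into `Option Bool` whose support (the set
where the value is not `none`) is countable. -/
structure P2Cond (O1 O3 : Type*) where
  toFun : O3 × O1 → Option Bool
  countable_dom : { x | toFun x ≠ none }.Countable

/-- The order on `P2` is reverse extension: `f ≤ g` iff `f` extends `g`. -/
def P2Le {O1 O3 : Type*} (f g : P2Cond O1 O3) : Prop :=
  ∀ x, g.toFun x ≠ none → f.toFun x = g.toFun x

open Ordinal Set Function

universe u

namespace CountablePartialFun

variable {ι W : Type u}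

def optDom (g : ι → Option Bool) : Set ι := {x | g x ≠ none}

def AgreeOnDom (g h : ι → Option Bool) : Prop := ∀ x ∈ optDom g, x ∈ optDom h → g x = h x

theorem mk_countable_optDom_le (α : Type u) :
    #{q : α → Option Bool // (optDom q).Countable} ≤ max #(α × Bool) ℵ₀ ^ ℵ₀ := by
  let graph (q : α → Option Bool) : Set (α × Bool) := {p | q p.1 = some p.2}
  have graph_injective : Injective graph := fun q q' h => funext fun x =>
    Option.ext fun b => Set.ext_iff.1 h (x, b)
  have graph_countable (q : α → Option Bool) (hq : (optDom q).Countable) :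
      (graph q).Countable := by
    refine (hq.prod countable_univ).mono fun p hp => mem_prod.2 ⟨?_, mem_univ p.2⟩
    simp [optDom, show q p.1 = some p.2 from hp]
  calc #{q : α → Option Bool // (optDom q).Countable}
      ≤ #{t : Set (α × Bool) // #t ≤ ℵ₀} :=
        mk_le_of_injective (f := fun q => ⟨graph q, (graph_countable q q.2).le_aleph0⟩)
          fun q q' h => Subtype.ext (graph_injective (congrArg Subtype.val h))
    _ ≤ _ := mk_bounded_set_le _ _

theorem mk_countable_optDom_le_continuum {α : Type u} (hα : #α ≤ 𝔠) :
    #{q : α → Option Bool // (optDom q).Countable} ≤ 𝔠 := by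
  have hprod : max #(α × Bool) ℵ₀ ≤ 𝔠 := by
    refine max_le ?_ aleph0_le_continuum
    calc #(α × Bool) = #α * 2 := by simp
      _ ≤ 𝔠 * 𝔠 := mul_le_mul' hα (nat_lt_continuum 2).le
      _ = 𝔠 := continuum_mul_self
  exact (mk_countable_optDom_le α).trans
    ((power_le_power_right hprod).trans continuum_power_aleph0.le)

section WitnessChain

variable [Nonempty W] (f : W → ι → Option Bool)

/-- An index whose member of the family restricts to `q` on `X`; an arbitrary index if there is
none. -/
noncomputable def witness (X : Set ι) (q : X → Option Bool) : W :=
  invFun (fun a => X.domRestrict (f a)) q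

noncomputable def witnessDom (X : Set ι) : Set ι :=
  ⋃ q : {q : X → Option Bool // (optDom q).Countable}, optDom (f (witness f X q))

noncomputable def witnessChain (o : Ordinal.{u}) : Set ι :=
  ⋃ j < o, witnessDom f (witnessChain j)
termination_by o

theorem mem_witnessChain {x : ι} {o : Ordinal.{u}} :
    x ∈ witnessChain f o ↔ ∃ j < o, x ∈ witnessDom f (witnessChain f j) := by
  rw [witnessChain]
  simp only [mem_iUnion, exists_prop]

variable {f}

theorem mk_witnessDom_le (hf : ∀ a, (optDom (f a)).Countable) {X : Set ι} (hX : #X ≤ 𝔠) :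
    #(witnessDom f X) ≤ 𝔠 := by
  refine (mk_iUnion_le _).trans ?_
  calc _ ≤ 𝔠 * 𝔠 := mul_le_mul' (mk_countable_optDom_le_continuum hX)
          (ciSup_le' fun _ => (hf _).le_aleph0.trans aleph0_le_continuum)
    _ = 𝔠 := continuum_mul_self

theorem mk_witnessChain_le (hf : ∀ a, (optDom (f a)).Countable) {o : Ordinal.{u}}
    (ho : o.card ≤ 𝔠) : #(witnessChain f o) ≤ 𝔠 := by
  induction o using WellFoundedLT.induction with
  | ind o ih =>
    rw [witnessChain]
    exact mk_biUnion_le_of_le ho aleph0_le_continuum _ fun j hj =>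
      mk_witnessDom_le hf (ih j hj ((card_le_card hj.le).trans ho))

theorem exists_lt_omega_one_subset_witnessChain {S : Set ι} (hS : S.Countable)
    (hSM : S ⊆ witnessChain f ω₁) : ∃ ζ < ω₁, S ⊆ witnessChain f ζ := by
  have hstage (x : S) : ∃ j < ω₁, (x : ι) ∈ witnessDom f (witnessChain f j) :=
    (mem_witnessChain f).1 (hSM x.2)
  choose j hj hjx using hstage
  refine ⟨⨆ x, j x + 1, iSup_add_one_lt_of_lt_cof ?_ hj, fun x hx => ?_⟩
  · rw [cof_omega_one]
    exact hS.le_aleph0.trans_lt aleph0_lt_aleph_one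
  · exact (mem_witnessChain f).2 ⟨j ⟨x, hx⟩,
      (lt_add_one _).trans_le (Ordinal.le_iSup (fun x => j x + 1) _), hjx _⟩

end WitnessChain

theorem exists_ne_agreeOnDom_of_continuum_lt_mk (hW : 𝔠 < #W) (f : W → ι → Option Bool)
    (hf : ∀ a, (optDom (f a)).Countable) : ∃ a b, a ≠ b ∧ AgreeOnDom (f a) (f b) := by
  have : Nonempty W := mk_ne_zero_iff.1 (continuum_pos.trans hW).ne'
  have hω₁ : (ω₁ : Ordinal.{u}).card ≤ 𝔠 := by simpa using aleph_one_le_continuum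
  let C : Set W := ⋃ o < ω₁,
    range fun q : {q : witnessChain f o → Option Bool // (optDom q).Countable} =>
      witness f (witnessChain f o) q
  have hC : #C ≤ 𝔠 :=
    mk_biUnion_le_of_le hω₁ aleph0_le_continuum _ fun o ho =>
      mk_range_le.trans (mk_countable_optDom_le_continuum
        (mk_witnessChain_le hf ((card_le_card ho.le).trans hω₁)))
  obtain ⟨a, haC⟩ : ∃ a, a ∉ C := by
    by_contra! h
    exact hW.not_ge (by rwa [← mk_univ, ← eq_univ_of_forall h])
  obtain ⟨ζ, hζ, hsub⟩ := exists_lt_omega_one_subset_witnessChain (f := f)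
    ((hf a).mono inter_subset_left) (inter_subset_right (s := optDom (f a)))
  set X := witnessChain f ζ
  let q : {q : X → Option Bool // (optDom q).Countable} :=
    ⟨X.domRestrict (f a), (hf a).preimage Subtype.val_injective⟩
  have hb : X.domRestrict (f (witness f X q)) = X.domRestrict (f a) :=
    invFun_eq (f := fun b => X.domRestrict (f b)) ⟨a, rfl⟩
  refine ⟨a, witness f X q, fun hab => ?_, fun x hxa hxb => ?_⟩
  · rw [hab] at haC
    exact haC (mem_biUnion hζ ⟨q, rfl⟩)
  · have hxX : x ∈ X := hsub ⟨hxa, (mem_witnessChain f).2 ⟨ζ, hζ, mem_iUnion.2 ⟨q, hxb⟩⟩⟩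
    exact (congrFun hb ⟨x, hxX⟩).symm

end CountablePartialFun

namespace P2Cond

open CountablePartialFun

variable {O1 O3 : Type*}

theorem exists_common_extension {f g : P2Cond O1 O3} (hfg : AgreeOnDom f.toFun g.toFun) :
    ∃ h, P2Le h f ∧ P2Le h g := by
  have or_eq_left {x} (hx : f.toFun x ≠ none) : (f.toFun x).or (g.toFun x) = f.toFun x :=
    Option.or_of_isSome (Option.ne_none_iff_isSome.1 hx)
  refine ⟨⟨fun x => (f.toFun x).or (g.toFun x),
    (f.countable_dom.union g.countable_dom).mono fun x hx => ?_⟩,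
    fun x hx => or_eq_left hx, fun x hx => ?_⟩ <;> by_cases hf : f.toFun x = none
  · exact Or.inr (by simpa [hf] using hx)
  · exact Or.inl hf
  · simp [hf]
  · exact (or_eq_left hf).trans (hfg x hf hx)

theorem mk_antichain_le_continuum {A : Set (P2Cond O1 O3)}
    (hA : ∀ f ∈ A, ∀ g ∈ A, f ≠ g → ¬ ∃ h, P2Le h f ∧ P2Le h g) : #A ≤ 𝔠 := by
  by_contra! hlt
  obtain ⟨a, b, hab, hagree⟩ := exists_ne_agreeOnDom_of_continuum_lt_mk hlt
    (fun a : A => a.1.toFun) fun a => a.1.countable_dom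
  exact hA a a.2 b b.2 (Subtype.coe_injective.ne hab) (exists_common_extension hagree)

end P2Cond

theorem continuum_eq_aleph_one_univ.{v} (h : (𝔠 : Cardinal.{u}) = ℵ₁) :
    (𝔠 : Cardinal.{v}) = ℵ₁ := by
  apply lift_injective.{u}
  rw [lift_continuum, lift_aleph, ← lift_continuum.{v}, h, lift_aleph]
  simp

/-- Under CH, `P2` satisfies the `ω₂`-chain condition: every antichain has cardinality at most
`ℵ₁`. Here `ω₁` and `ω₃` are realized as the canonical types of the ordinals `(ℵ₁).ord` and
`(ℵ₃).ord`. -/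
theorem stmt10 (hCH : (2 : Cardinal) ^ Cardinal.aleph0 = Cardinal.aleph 1)
    (A : Set (P2Cond (Cardinal.aleph 1).ord.ToType (Cardinal.aleph 3).ord.ToType))
    (hA : ∀ f ∈ A, ∀ g ∈ A, f ≠ g → ¬ ∃ h, P2Le h f ∧ P2Le h g) :
    #A ≤ Cardinal.aleph 1 := by
  rw [two_power_aleph0] at hCH
  exact (P2Cond.mk_antichain_le_continuum hA).trans_eq (continuum_eq_aleph_one_univ hCH)
end

section
/- Let B be a Boolean subalgebra of the power set of ω1 containing all finite subsets of ω1, let L be a Stone space of B with clopen correspondence X ↦ [X], let (X_γ)_{γ<ω2} be a strong almost disjoint family with all X_γ ∈ B, and let (μ_ξ)_{ξ<ω1} be a family of finite regular signed Borel measures on L. Then there exists γ' < ω2 such that for every γ with γ' < γ < ω2, every ξ < ω1, and every X ∈ B with X ⊆ X_γ, one has μ_ξ([X]) = μ_ξ(⋃_{λ∈X} [{λ}]). -/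
/-!
Write `R γ = [X γ] \ ⋃_{λ ∈ X γ} [{λ}]` for the non-principal ultrafilters containing `X γ`.
If `γ ≠ δ`, then `[X γ] ∩ [X δ] = [X γ ∩ X δ]` is a finite union of the `[{λ}]`, so the `R γ` are
pairwise disjoint Borel sets, and each finite measure `|μ ξ|` charges only countably many of them.
These `ω₁` countable sets of bad indices are bounded in the regular cardinal `ω₂`; above the
bound, `[X] \ ⋃_{λ ∈ X} [{λ}] ⊆ R γ` is `|μ ξ|`-null for every `X ⊆ X γ` in `B`.
-/

open Cardinal MeasureTheory

universe u v

theorem Order.exists_forall_lt_of_mk_lt_cof {α : Type u} [LinearOrder α] {s : Set α}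
    (hs : #s < Order.cof α) : ∃ a, ∀ b ∈ s, b < a :=
  not_isCofinal_iff.1 fun h => (Order.cof_le h).not_gt hs

theorem Cardinal.IsRegular.exists_forall_lt_of_mk_lt {κ : Cardinal.{v}} (hκ : κ.IsRegular)
    {ι : Type u} (hι : Cardinal.lift.{v} #ι < Cardinal.lift.{u} κ) (S : ι → Set κ.ord.ToType)
    (hS : ∀ i, #(S i) < κ) : ∃ a, ∀ i, ∀ b ∈ S i, b < a := by
  have hcof : Order.cof κ.ord.ToType = κ := by rw [Ordinal.cof_toType, hκ.cof_ord]
  choose bound hbound using fun i =>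
    Order.exists_forall_lt_of_mk_lt_cof ((hS i).trans_eq hcof.symm)
  have hrange : #(Set.range bound) < Order.cof κ.ord.ToType :=
    (lift_lt.1 (mk_range_le_lift.trans_lt hι)).trans_eq hcof.symm
  obtain ⟨a, ha⟩ := Order.exists_forall_lt_of_mk_lt_cof hrange
  exact ⟨a, fun i b hb => (hbound i b hb).trans (ha _ ⟨i, rfl⟩)⟩

theorem exists_forall_lt_of_countable_of_mk_le_aleph_one {ι : Type u} (hι : #ι ≤ ℵ₁)
    (S : ι → Set (ℵ_ 2).ord.ToType.{v}) (hS : ∀ i, (S i).Countable) :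
    ∃ a, ∀ i, ∀ b ∈ S i, b < a := by
  have hreg : (ℵ_ 2 : Cardinal.{v}).IsRegular := by
    simpa [one_add_one_eq_two] using isRegular_aleph_add_one 1
  refine hreg.exists_forall_lt_of_mk_lt ?_ S fun i => ?_
  · rw [lift_aleph, Ordinal.lift_ofNat]
    refine (lift_le.2 hι).trans_lt ?_
    rw [lift_aleph, Ordinal.lift_one]
    exact aleph_lt_aleph.2 one_lt_two
  · exact (le_aleph0_iff_set_countable.2 (hS i)).trans_lt
      (aleph0_lt_aleph_one.trans (aleph_lt_aleph.2 one_lt_two))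

theorem MeasureTheory.SignedMeasure.apply_eq_of_subset_of_totalVariation_diff_eq_zero
    {α : Type*} [MeasurableSpace α] (μ : SignedMeasure α) {s t : Set α}
    (hs : MeasurableSet s) (ht : MeasurableSet t) (hst : s ⊆ t)
    (h : μ.totalVariation (t \ s) = 0) : μ t = μ s := by
  rw [← Set.union_sdiff_cancel hst,
    VectorMeasure.of_union Set.disjoint_sdiff_right hs (ht.diff hs),
    μ.null_of_totalVariation_zero h, add_zero]

structure IsSetAlgebraHomOn {α β : Type*} (B : Set (Set α)) (e : Set α → Set β) : Prop where
  map_union : ∀ X ∈ B, ∀ Y ∈ B, e (X ∪ Y) = e X ∪ e Y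
  map_compl : ∀ X ∈ B, e Xᶜ = (e X)ᶜ

/-- In the Stone space of `B`, the non-principal ultrafilters containing `X`. -/
def nonprincipalPart {α β : Type*} (e : Set α → Set β) (X : Set α) : Set β :=
  e X \ ⋃ l ∈ X, e {l}

namespace IsSetAlgebraHomOn

variable {α β : Type*} {B : Set (Set α)} {e : Set α → Set β}

theorem map_inter (hB : IsSetAlgebra B) (he : IsSetAlgebraHomOn B e) {X Y : Set α}
    (hX : X ∈ B) (hY : Y ∈ B) : e (X ∩ Y) = e X ∩ e Y := by
  have hXY : e (Xᶜ ∪ Yᶜ)ᶜ = e X ∩ e Y := by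
    rw [he.map_compl _ (hB.union_mem (hB.compl_mem hX) (hB.compl_mem hY)),
      he.map_union _ (hB.compl_mem hX) _ (hB.compl_mem hY), he.map_compl _ hX, he.map_compl _ hY,
      Set.compl_union, compl_compl, compl_compl]
  rwa [Set.compl_union, compl_compl, compl_compl] at hXY

theorem map_empty (hB : IsSetAlgebra B) (he : IsSetAlgebraHomOn B e) : e ∅ = ∅ := by
  have h := he.map_inter hB hB.empty_mem (hB.compl_mem hB.empty_mem)
  rwa [Set.inter_compl_self, he.map_compl _ hB.empty_mem, Set.inter_compl_self] at h

theorem map_mono (hB : IsSetAlgebra B) (he : IsSetAlgebraHomOn B e) {X Y : Set α}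
    (hX : X ∈ B) (hY : Y ∈ B) (hXY : X ⊆ Y) : e X ⊆ e Y := by
  rw [← Set.inter_eq_left.2 hXY, he.map_inter hB hX hY]
  exact Set.inter_subset_right

theorem disjoint_map (hB : IsSetAlgebra B) (he : IsSetAlgebraHomOn B e) {X Y : Set α}
    (hX : X ∈ B) (hY : Y ∈ B) (hXY : Disjoint X Y) : Disjoint (e X) (e Y) := by
  rw [Set.disjoint_iff_inter_eq_empty, ← he.map_inter hB hX hY,
    Set.disjoint_iff_inter_eq_empty.1 hXY, he.map_empty hB]

theorem map_eq_biUnion_singleton_of_finite (hB : IsSetAlgebra B) (he : IsSetAlgebraHomOn B e)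
    (hfin : ∀ F : Set α, F.Finite → F ∈ B) {F : Set α} (hF : F.Finite) :
    e F = ⋃ l ∈ F, e {l} := by
  induction F, hF using Set.Finite.induction_on with
  | empty => simpa using he.map_empty hB
  | @insert a s _ hs ih =>
    rw [Set.biUnion_insert, Set.insert_eq, he.map_union _ (hfin _ (Set.finite_singleton a)) _
      (hfin _ hs), ih]

theorem biUnion_map_singleton_subset (hB : IsSetAlgebra B) (he : IsSetAlgebraHomOn B e)
    (hfin : ∀ F : Set α, F.Finite → F ∈ B) {X : Set α} (hX : X ∈ B) :
    ⋃ l ∈ X, e {l} ⊆ e X :=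
  Set.iUnion₂_subset fun l hl =>
    he.map_mono hB (hfin _ (Set.finite_singleton l)) hX (Set.singleton_subset_iff.2 hl)

theorem nonprincipalPart_mono (hB : IsSetAlgebra B) (he : IsSetAlgebraHomOn B e)
    (hfin : ∀ F : Set α, F.Finite → F ∈ B) {X Y : Set α} (hX : X ∈ B) (hY : Y ∈ B)
    (hXY : X ⊆ Y) : nonprincipalPart e X ⊆ nonprincipalPart e Y := by
  rintro x ⟨hxX, hx⟩
  refine ⟨he.map_mono hB hX hY hXY hxX, fun hxY => ?_⟩
  obtain ⟨l, -, hxl⟩ := Set.mem_iUnion₂.1 hxY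
  by_cases hl : l ∈ X
  · exact hx (Set.mem_biUnion hl hxl)
  · exact Set.disjoint_left.1 (he.disjoint_map hB (hfin _ (Set.finite_singleton l)) hX
      (Set.disjoint_singleton_left.2 hl)) hxl hxX

theorem disjoint_nonprincipalPart (hB : IsSetAlgebra B) (he : IsSetAlgebraHomOn B e)
    (hfin : ∀ F : Set α, F.Finite → F ∈ B) {X Y : Set α} (hX : X ∈ B) (hY : Y ∈ B)
    (hXY : (X ∩ Y).Finite) : Disjoint (nonprincipalPart e X) (nonprincipalPart e Y) := by
  rw [Set.disjoint_left]
  rintro x ⟨hxX, hx⟩ ⟨hxY, -⟩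
  have hxXY : x ∈ ⋃ l ∈ X ∩ Y, e {l} := by
    rw [← he.map_eq_biUnion_singleton_of_finite hB hfin hXY, he.map_inter hB hX hY]
    exact ⟨hxX, hxY⟩
  exact hx (Set.biUnion_mono Set.inter_subset_left (fun _ _ => subset_rfl) hxXY)

end IsSetAlgebraHomOn

theorem stmt12_general
    (B : Set (Set (Cardinal.aleph 1).ord.ToType))
    (hBcompl : ∀ X ∈ B, Xᶜ ∈ B)
    (hBunion : ∀ X ∈ B, ∀ Y ∈ B, X ∪ Y ∈ B)
    (hBfin : ∀ X : Set (Cardinal.aleph 1).ord.ToType, X.Finite → X ∈ B)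
    (L : Type) [TopologicalSpace L]
    [MeasurableSpace L] [BorelSpace L]
    (e : Set (Cardinal.aleph 1).ord.ToType → Set L)
    (heclopen : ∀ X ∈ B, IsClopen (e X))
    (heunion : ∀ X ∈ B, ∀ Y ∈ B, e (X ∪ Y) = e X ∪ e Y)
    (hecompl : ∀ X ∈ B, e Xᶜ = (e X)ᶜ)
    (Xf : (Cardinal.aleph 2).ord.ToType → Set (Cardinal.aleph 1).ord.ToType)
    (hXB : ∀ γ, Xf γ ∈ B)
    (hXad : ∀ γ δ, γ ≠ δ → (Xf γ ∩ Xf δ).Finite)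
    (μ : (Cardinal.aleph 1).ord.ToType → SignedMeasure L) :
    ∃ γ' : (Cardinal.aleph 2).ord.ToType, ∀ γ, γ' < γ →
      ∀ ξ : (Cardinal.aleph 1).ord.ToType, ∀ X ∈ B, X ⊆ Xf γ →
        μ ξ (e X) = μ ξ (⋃ l ∈ X, e {l}) := by
  have hB : IsSetAlgebra B :=
    ⟨hBfin ∅ Set.finite_empty, hBcompl, fun X Y hX hY => hBunion X hX Y hY⟩
  have he : IsSetAlgebraHomOn B e := ⟨heunion, hecompl⟩
  have hopen (X) : IsOpen (⋃ l ∈ X, e {l}) :=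
    isOpen_biUnion fun l _ => (heclopen _ (hBfin _ (Set.finite_singleton l))).isOpen
  have hmeas {X} (hX : X ∈ B) : MeasurableSet (nonprincipalPart e X) :=
    (heclopen X hX).isClosed.measurableSet.diff (hopen X).measurableSet
  have hcount (ξ) : {γ | 0 < (μ ξ).totalVariation (nonprincipalPart e (Xf γ))}.Countable :=
    Measure.countable_meas_pos_of_disjoint_iUnion (fun γ => hmeas (hXB γ))
      fun γ δ hγδ => he.disjoint_nonprincipalPart hB hBfin (hXB γ) (hXB δ) (hXad γ δ hγδ)
  obtain ⟨γ', hγ'⟩ := exists_forall_lt_of_countable_of_mk_le_aleph_one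
    (by rw [mk_toType, card_ord]) _ hcount
  refine ⟨γ', fun γ hγ ξ X hX hXγ => ?_⟩
  refine (μ ξ).apply_eq_of_subset_of_totalVariation_diff_eq_zero (hopen X).measurableSet
    (heclopen X hX).isClosed.measurableSet (he.biUnion_map_singleton_subset hB hBfin hX) ?_
  refine measure_mono_null (he.nonprincipalPart_mono hB hBfin hX (hXB γ) hXγ) ?_
  by_contra hpos
  exact (hγ' ξ γ (pos_iff_ne_zero.2 hpos)).not_gt hγ

/-- Given a Boolean subalgebra `B` of the power set of `ω₁` containing all finite sets, a Stone
space `L` of `B` (via a Boolean isomorphism `e` from `B` onto the clopen algebra of `L`), a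
strong almost disjoint family `(X γ)_{γ<ω₂}` inside `B`, and a family `(μ ξ)_{ξ<ω₁}` of finite
regular signed Borel measures on `L`, there is `γ' < ω₂` such that for all `γ > γ'`, all
`ξ < ω₁` and all `X ∈ B` with `X ⊆ X γ`, `μ ξ [X] = μ ξ (⋃_{l ∈ X} [{l}])`. -/
theorem stmt12
    (B : Set (Set (Cardinal.aleph 1).ord.ToType))
    (hBcompl : ∀ X ∈ B, Xᶜ ∈ B)
    (hBunion : ∀ X ∈ B, ∀ Y ∈ B, X ∪ Y ∈ B)
    (hBfin : ∀ X : Set (Cardinal.aleph 1).ord.ToType, X.Finite → X ∈ B)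
    (L : Type) [TopologicalSpace L] [CompactSpace L] [T2Space L] [TotallyDisconnectedSpace L]
    [MeasurableSpace L] [BorelSpace L]
    (e : Set (Cardinal.aleph 1).ord.ToType → Set L)
    (heclopen : ∀ X ∈ B, IsClopen (e X))
    (heinj : ∀ X ∈ B, ∀ Y ∈ B, e X = e Y → X = Y)
    (hesurj : ∀ C : Set L, IsClopen C → ∃ X ∈ B, e X = C)
    (heunion : ∀ X ∈ B, ∀ Y ∈ B, e (X ∪ Y) = e X ∪ e Y)
    (hecompl : ∀ X ∈ B, e Xᶜ = (e X)ᶜ)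
    (Xf : (Cardinal.aleph 2).ord.ToType → Set (Cardinal.aleph 1).ord.ToType)
    (hXB : ∀ γ, Xf γ ∈ B)
    (hXunc : ∀ γ, ¬ (Xf γ).Countable)
    (hXad : ∀ γ δ, γ ≠ δ → (Xf γ ∩ Xf δ).Finite)
    (μ : (Cardinal.aleph 1).ord.ToType → SignedMeasure L)
    (hreg : ∀ ξ, (μ ξ).toJordanDecomposition.posPart.Regular ∧
      (μ ξ).toJordanDecomposition.negPart.Regular) :
    ∃ γ' : (Cardinal.aleph 2).ord.ToType, ∀ γ, γ' < γ →
      ∀ ξ : (Cardinal.aleph 1).ord.ToType, ∀ X ∈ B, X ⊆ Xf γ →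
        μ ξ (e X) = μ ξ (⋃ l ∈ X, e {l}) :=
  stmt12_general B hBcompl hBunion hBfin L e heclopen heunion hecompl Xf hXB hXad μ
end

section
/- Let B be a Boolean subalgebra of the power set of ω1 containing all finite subsets of ω1, let L be a Stone space of B with clopen correspondence X ↦ [X], let K be a totally disconnected compact Hausdorff space, and let T : C(L, ℝ) → C(K, ℝ) be an isomorphic embedding of Banach spaces. Then there exist a Boolean subalgebra A0 of the algebra of clopen subsets of K with cardinality at most ℵ1 and a family (ψ_ξ)_{ξ<ω1} of continuous linear functionals on C(K, ℝ) with ‖ψ_ξ‖ ≤ ‖T^{-1}‖ for all ξ, such that for every ξ < ω1 and every continuous linear functional ρ on C(K, ℝ) satisfying ρ(χ_a) = ψ_ξ(χ_a) for every a ∈ A0, one has ρ(T(χ_{[{λ}]})) = 1 if λ = ξ and ρ(T(χ_{[{λ}]})) = 0 if λ ≠ ξ, for every λ < ω1. -/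
/-!
For `ξ < ω₁` pick a point `x ξ ∈ [{ξ}]`; it lies in no other `[{λ}]`. The functional
`T f ↦ f (x ξ)` on the range of `T` has norm at most `M`, and `ψ ξ` is a Hahn–Banach extension
of it. Each `T χ_{[{λ}]}` is a uniform limit of simple functions over countably many clopen
subsets of `K`, and `A0` is the Boolean algebra generated by all these sets; it has at most `ℵ₁`
elements because it embeds into the subring they generate in the Boolean ring `Set K`. A
functional agreeing with `ψ ξ` on all `χ_a`, `a ∈ A0`, agrees with it on their closed span, hence
on `T χ_{[{λ}]}`, where `ψ ξ` takes the value `χ_{[{λ}]} (x ξ) = δ_{λξ}`.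
-/

open Cardinal

theorem IsClopen.continuous_indicator_one {K : Type*} [TopologicalSpace K] {a : Set K}
    (ha : IsClopen a) : Continuous (a.indicator (fun _ => (1 : ℝ))) := by
  apply IsLocallyConstant.continuous
  intro s
  classical
  by_cases h1 : (1 : ℝ) ∈ s <;> by_cases h0 : (0 : ℝ) ∈ s
  · have : a.indicator (fun _ => (1 : ℝ)) ⁻¹' s = Set.univ := by
      ext x; by_cases hx : x ∈ a <;> simp [Set.indicator_apply, hx, h1, h0]
    rw [this]; exact isOpen_univ
  · have : a.indicator (fun _ => (1 : ℝ)) ⁻¹' s = a := by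
      ext x; by_cases hx : x ∈ a <;> simp [Set.indicator_apply, hx, h1, h0]
    rw [this]; exact ha.2
  · have : a.indicator (fun _ => (1 : ℝ)) ⁻¹' s = aᶜ := by
      ext x; by_cases hx : x ∈ a <;> simp [Set.indicator_apply, hx, h1, h0]
    rw [this]; exact ha.1.isOpen_compl
  · have : a.indicator (fun _ => (1 : ℝ)) ⁻¹' s = ∅ := by
      ext x; by_cases hx : x ∈ a <;> simp [Set.indicator_apply, hx, h1, h0]
    rw [this]; exact isOpen_empty

noncomputable def chi {K : Type*} [TopologicalSpace K] (a : Set K) (ha : IsClopen a) :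
    C(K, ℝ) := ⟨a.indicator (fun _ => 1), ha.continuous_indicator_one⟩

open TopologicalSpace

theorem chi_apply {K : Type*} [TopologicalSpace K] {a : Set K} (ha : IsClopen a) (x : K)
    [Decidable (x ∈ a)] : chi a ha x = if x ∈ a then 1 else 0 :=
  Set.indicator_apply a (fun _ => 1) x

theorem toBoolRing_compl {α : Type*} [BooleanAlgebra α] (a : α) :
    toBoolRing aᶜ = 1 + toBoolRing a := by
  rw [← hnot_eq_compl, ← top_symmDiff, toBoolRing_symmDiff, toBoolRing_top]

theorem toBoolRing_sup {α : Type*} [BooleanAlgebra α] (a b : α) :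
    toBoolRing (a ⊔ b) = toBoolRing a + toBoolRing b + toBoolRing a * toBoolRing b := by
  rw [← symmDiff_symmDiff_inf, toBoolRing_symmDiff, toBoolRing_symmDiff, toBoolRing_inf]

theorem BooleanSubalgebra.cardinalMk_closure_le_max {α : Type*} [BooleanAlgebra α] (s : Set α) :
    #(closure s) ≤ #s ⊔ ℵ₀ := by
  set R := Algebra.adjoin ℤ (toBoolRing '' s)
  have hR : ∀ a ∈ closure s, toBoolRing a ∈ R := by
    intro a ha
    induction ha using closure_bot_sup_induction with
    | mem x hx => exact Algebra.subset_adjoin ⟨x, hx, rfl⟩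
    | bot => simpa only [toBoolRing_bot] using R.zero_mem
    | sup x _ y _ hx hy =>
      rw [toBoolRing_sup]; exact R.add_mem (R.add_mem hx hy) (R.mul_mem hx hy)
    | compl x _ hx => rw [toBoolRing_compl]; exact R.add_mem R.one_mem hx
  have hinj : Function.Injective fun a : closure s => (⟨toBoolRing a.1, hR a.1 a.2⟩ : R) :=
    fun a b h => Subtype.ext <| toBoolRing.injective <| congrArg (fun r : R => r.1) h
  have hcard := Algebra.lift_cardinalMk_adjoin_le ℤ (toBoolRing '' s)
  rw [mk_int, lift_aleph0, max_comm (ℵ₀ : Cardinal), max_assoc, max_self, ← lift_aleph0.{0},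
    ← lift_max, lift_le] at hcard
  calc #(closure s) ≤ #R := mk_le_of_injective hinj
    _ ≤ #(toBoolRing '' s) ⊔ ℵ₀ := hcard
    _ ≤ #s ⊔ ℵ₀ := max_le_max_right _ mk_image_le

theorem BooleanSubalgebra.isClopen_of_mem_closure {K : Type*} [TopologicalSpace K]
    {S : Set (Set K)} (hS : ∀ a ∈ S, IsClopen a) {a : Set K} (ha : a ∈ closure S) :
    IsClopen a := by
  induction ha using closure_bot_sup_induction with
  | mem x hx => exact hS x hx
  | bot => exact isClopen_empty
  | sup x _ y _ hx hy => exact hx.union hy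
  | compl x _ hx => exact hx.compl

theorem mk_iUnion_ord_aleph_one_le {α : Type*} (s : (aleph 1).ord.ToType → Set α)
    (hs : ∀ i, (s i).Countable) : #(⋃ i, s i) ≤ aleph 1 := by
  have h := (mk_iUnion_le_lift s).trans
    (mul_le_mul' le_rfl (ciSup_le' fun i => lift_le_aleph0.2 (hs i).le_aleph0))
  rw [mk_ord_toType, lift_aleph, Ordinal.lift_one, mul_aleph0_eq (aleph0_le_aleph 1)] at h
  exact lift_le.1 (h.trans_eq (by rw [lift_aleph, Ordinal.lift_one]))

section Approximation

variable {K : Type*} [TopologicalSpace K] [CompactSpace K] [T2Space K] [TotallyDisconnectedSpace K]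

theorem exists_norm_sub_sum_chi_lt (f : C(K, ℝ)) {ε : ℝ} (hε : 0 < ε) :
    ∃ (m : ℕ) (U : Fin m → Clopens K) (v : Fin m → ℝ),
      ‖f - ∑ i, v i • chi (U i) (U i).isClopen‖ < ε := by
  obtain ⟨m, U, v, hUv⟩ := f.exists_finite_sum_const_indicator_approximation_of_mem_nhds_diagonal
    (nhdsSet_diagonal_le_uniformity (Metric.dist_mem_uniformity hε))
  refine ⟨m, U, v, (ContinuousMap.norm_lt_iff _ hε).2 fun x => ?_⟩
  classical
  simpa [chi, dist_eq_norm, Set.indicator_apply] using hUv x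

theorem exists_countable_clopens_mem_closure_span (f : C(K, ℝ)) :
    ∃ J : Set (Clopens K), J.Countable ∧
      f ∈ closure (Submodule.span ℝ ((fun U : Clopens K => chi (U : Set K) U.isClopen) '' J) :
        Set C(K, ℝ)) := by
  choose m U v hUv using fun n : ℕ => exists_norm_sub_sum_chi_lt f (Nat.one_div_pos_of_nat (n := n))
  refine ⟨⋃ n, Set.range (U n), Set.countable_iUnion fun n => Set.countable_range _, ?_⟩
  refine Metric.mem_closure_iff.2 fun ε hε => ?_
  obtain ⟨n, hn⟩ := exists_nat_one_div_lt hε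
  refine ⟨∑ i, v n i • chi (U n i) (U n i).isClopen, Submodule.sum_mem _ fun i _ =>
    Submodule.smul_mem _ _ (Submodule.subset_span ⟨U n i, Set.mem_iUnion.2 ⟨n, i, rfl⟩, rfl⟩), ?_⟩
  rw [dist_eq_norm]
  exact (hUv n).trans hn

end Approximation

theorem exists_norm_le_apply_comp_eq_of_norm_le_mul_norm {E F : Type*} [NormedAddCommGroup E]
    [NormedSpace ℝ E] [Nontrivial E] [NormedAddCommGroup F] [NormedSpace ℝ F] (T : E →L[ℝ] F)
    {M : ℝ} (hT : ∀ x, ‖x‖ ≤ M * ‖T x‖) (φ : E →ₗ[ℝ] ℝ) (hφ : ∀ x, ‖φ x‖ ≤ ‖x‖) :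
    ∃ ψ : F →L[ℝ] ℝ, ‖ψ‖ ≤ M ∧ ∀ x, ψ (T x) = φ x := by
  have hM : 0 ≤ M := by
    obtain ⟨x, hx⟩ := exists_ne (0 : E)
    nlinarith [hT x, norm_pos_iff.2 hx, norm_nonneg (T x)]
  have hinj : Function.Injective T := fun x y h => by
    have := hT (x - y)
    rwa [map_sub, h, sub_self, norm_zero, mul_zero, norm_le_zero_iff, sub_eq_zero] at this
  let eqv := LinearEquiv.ofInjective T.toLinearMap hinj
  let φ' : LinearMap.range T.toLinearMap →ₗ[ℝ] ℝ := φ ∘ₗ eqv.symm.toLinearMap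
  have hφ' (y) : ‖φ' y‖ ≤ M * ‖y‖ := by
    have hy : T (eqv.symm y) = y := congrArg Subtype.val (eqv.apply_symm_apply y)
    calc ‖φ' y‖ ≤ ‖eqv.symm y‖ := hφ _
      _ ≤ M * ‖(y : F)‖ := hy ▸ hT (eqv.symm y)
  obtain ⟨ψ, hψφ, hψnorm⟩ := exists_extension_norm_eq _ (φ'.mkContinuous M hφ')
  refine ⟨ψ, hψnorm ▸ LinearMap.mkContinuous_norm_le _ hM _, fun x => ?_⟩
  exact (hψφ (eqv x)).trans (congrArg φ (eqv.symm_apply_apply x))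

section Stone

variable {α L : Type*} {B : Set (Set α)} {e : Set α → Set L}

theorem apply_empty_eq_empty (hB : ∅ ∈ B) (hBcompl : ∀ X ∈ B, Xᶜ ∈ B)
    (heunion : ∀ X ∈ B, ∀ Y ∈ B, e (X ∪ Y) = e X ∪ e Y) (hecompl : ∀ X ∈ B, e Xᶜ = (e X)ᶜ) :
    e ∅ = ∅ := by
  have huniv : e Set.univ = Set.univ := by
    rw [← Set.union_compl_self ∅, heunion _ hB _ (hBcompl _ hB), hecompl _ hB,
      Set.union_compl_self]
  have := hecompl _ (hBcompl _ hB)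
  rwa [compl_compl, Set.compl_empty, huniv, Set.compl_univ] at this

theorem exists_mem_apply_singleton_iff (hBcompl : ∀ X ∈ B, Xᶜ ∈ B)
    (hBfin : ∀ X : Set α, X.Finite → X ∈ B) (heinj : ∀ X ∈ B, ∀ Y ∈ B, e X = e Y → X = Y)
    (heunion : ∀ X ∈ B, ∀ Y ∈ B, e (X ∪ Y) = e X ∪ e Y) (hecompl : ∀ X ∈ B, e Xᶜ = (e X)ᶜ)
    (ξ : α) : ∃ x, ∀ l, x ∈ e {l} ↔ l = ξ := by
  have hsingle (l : α) : {l} ∈ B := hBfin _ (Set.finite_singleton l)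
  have hempty := apply_empty_eq_empty (hBfin _ Set.finite_empty) hBcompl heunion hecompl
  obtain ⟨x, hx⟩ : (e {ξ}).Nonempty := by
    rw [Set.nonempty_iff_ne_empty, ← hempty]
    exact fun h => Set.singleton_ne_empty ξ (heinj _ (hsingle ξ) _ (hBfin _ Set.finite_empty) h)
  refine ⟨x, fun l => ⟨fun hl => ?_, fun h => h ▸ hx⟩⟩
  by_contra hne
  have hsub : e {l} ⊆ e {ξ}ᶜ := by
    have h : {l} ∪ {ξ}ᶜ = ({ξ}ᶜ : Set α) := Set.union_eq_right.2 (Set.singleton_subset_iff.2 hne)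
    rw [← h, heunion _ (hsingle l) _ (hBcompl _ (hsingle ξ))]
    exact Set.subset_union_left
  rw [hecompl _ (hsingle ξ)] at hsub
  exact hsub hl hx

end Stone

theorem stmt14_general
    (B : Set (Set (Cardinal.aleph 1).ord.ToType))
    (hBcompl : ∀ X ∈ B, Xᶜ ∈ B)
    (hBfin : ∀ X : Set (Cardinal.aleph 1).ord.ToType, X.Finite → X ∈ B)
    (L : Type) [TopologicalSpace L] [CompactSpace L]
    (e : Set (Cardinal.aleph 1).ord.ToType → Set L)
    (heclopen : ∀ X ∈ B, IsClopen (e X))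
    (heinj : ∀ X ∈ B, ∀ Y ∈ B, e X = e Y → X = Y)
    (heunion : ∀ X ∈ B, ∀ Y ∈ B, e (X ∪ Y) = e X ∪ e Y)
    (hecompl : ∀ X ∈ B, e Xᶜ = (e X)ᶜ)
    (K : Type) [TopologicalSpace K] [CompactSpace K] [T2Space K] [TotallyDisconnectedSpace K]
    (T : C(L, ℝ) →L[ℝ] C(K, ℝ)) (M : ℝ)
    (hT : ∀ f : C(L, ℝ), ‖f‖ ≤ M * ‖T f‖) :
    ∃ (A0 : Set (Set K)) (hA0 : ∀ a ∈ A0, IsClopen a),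
      (∅ ∈ A0) ∧ (∀ a ∈ A0, aᶜ ∈ A0) ∧ (∀ a ∈ A0, ∀ b ∈ A0, a ∪ b ∈ A0) ∧
      #A0 ≤ Cardinal.aleph 1 ∧
      ∃ ψ : (Cardinal.aleph 1).ord.ToType → (C(K, ℝ) →L[ℝ] ℝ),
        (∀ ξ, ‖ψ ξ‖ ≤ M) ∧
        ∀ ξ, ∀ ρ : C(K, ℝ) →L[ℝ] ℝ,
          (∀ a, ∀ ha : a ∈ A0, ρ (chi a (hA0 a ha)) = ψ ξ (chi a (hA0 a ha))) →
          ∀ l : (Cardinal.aleph 1).ord.ToType,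
            ρ (T (chi (e {l}) (heclopen _ (hBfin _ (Set.finite_singleton l))))) =
              if l = ξ then 1 else 0 := by
  classical
  choose x hx using exists_mem_apply_singleton_iff hBcompl hBfin heinj heunion hecompl
  choose ψ hψM hψT using fun ξ =>
    have : Nonempty L := ⟨x ξ⟩
    exists_norm_le_apply_comp_eq_of_norm_le_mul_norm T hT
      (ContinuousMap.evalCLM ℝ (x ξ)).toLinearMap fun f => f.norm_coe_le_norm (x ξ)
  choose J hJ hTJ using fun l => exists_countable_clopens_mem_closure_span
    (T (chi (e {l}) (heclopen _ (hBfin _ (Set.finite_singleton l)))))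
  set S : Set (Set K) := ⋃ l, SetLike.coe '' J l
  have hS : #S ≤ aleph 1 := mk_iUnion_ord_aleph_one_le _ fun l => (hJ l).image _
  let A := BooleanSubalgebra.closure S
  have hA (a) (ha : a ∈ A) : IsClopen a := BooleanSubalgebra.isClopen_of_mem_closure
    (by rintro _ ⟨_, ⟨l, rfl⟩, U, -, rfl⟩; exact U.isClopen) ha
  refine ⟨A, hA, A.bot_mem, fun _ => A.compl_mem, fun _ ha _ hb => A.sup_mem ha hb,
    (BooleanSubalgebra.cardinalMk_closure_le_max S).trans (max_le hS (aleph0_le_aleph 1)),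
    ψ, hψM, fun ξ ρ hρ l => ?_⟩
  have hagree : Set.EqOn ρ (ψ ξ) ((fun U : Clopens K => chi (U : Set K) U.isClopen) '' J l) := by
    rintro _ ⟨U, hU, rfl⟩
    exact hρ U (BooleanSubalgebra.subset_closure (Set.mem_iUnion.2 ⟨l, U, hU, rfl⟩))
  rw [ContinuousLinearMap.eqOn_closure_span hagree (hTJ l), hψT]
  simp [chi_apply, hx]

/-- Let `B` be a Boolean subalgebra of the power set of `ω₁` containing all finite sets, `L` a
Stone space of `B` (via a Boolean isomorphism `e` from `B` onto the clopen algebra of `L`), `K`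
a totally disconnected compact Hausdorff space and `T : C(L,ℝ) → C(K,ℝ)` an isomorphic
embedding, with `M` an upper bound for the norm of its inverse (`‖f‖ ≤ M * ‖T f‖`). Then there
are a Boolean subalgebra `A0` of the clopen algebra of `K` of cardinality at most `ℵ₁` and
functionals `(ψ ξ)_{ξ<ω₁}` on `C(K,ℝ)` of norm at most `M` such that any functional `ρ`
agreeing with `ψ ξ` on the characteristic functions of members of `A0` satisfies
`ρ (T (χ_{[{l}]})) = δ_ξ({l})` for all `l < ω₁`. -/
theorem stmt14
    (B : Set (Set (Cardinal.aleph 1).ord.ToType))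
    (hBcompl : ∀ X ∈ B, Xᶜ ∈ B)
    (hBunion : ∀ X ∈ B, ∀ Y ∈ B, X ∪ Y ∈ B)
    (hBfin : ∀ X : Set (Cardinal.aleph 1).ord.ToType, X.Finite → X ∈ B)
    (L : Type) [TopologicalSpace L] [CompactSpace L] [T2Space L] [TotallyDisconnectedSpace L]
    (e : Set (Cardinal.aleph 1).ord.ToType → Set L)
    (heclopen : ∀ X ∈ B, IsClopen (e X))
    (heinj : ∀ X ∈ B, ∀ Y ∈ B, e X = e Y → X = Y)
    (hesurj : ∀ C : Set L, IsClopen C → ∃ X ∈ B, e X = C)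
    (heunion : ∀ X ∈ B, ∀ Y ∈ B, e (X ∪ Y) = e X ∪ e Y)
    (hecompl : ∀ X ∈ B, e Xᶜ = (e X)ᶜ)
    (K : Type) [TopologicalSpace K] [CompactSpace K] [T2Space K] [TotallyDisconnectedSpace K]
    (T : C(L, ℝ) →L[ℝ] C(K, ℝ)) (M : ℝ)
    (hT : ∀ f : C(L, ℝ), ‖f‖ ≤ M * ‖T f‖) :
    ∃ (A0 : Set (Set K)) (hA0 : ∀ a ∈ A0, IsClopen a),
      (∅ ∈ A0) ∧ (∀ a ∈ A0, aᶜ ∈ A0) ∧ (∀ a ∈ A0, ∀ b ∈ A0, a ∪ b ∈ A0) ∧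
      #A0 ≤ Cardinal.aleph 1 ∧
      ∃ ψ : (Cardinal.aleph 1).ord.ToType → (C(K, ℝ) →L[ℝ] ℝ),
        (∀ ξ, ‖ψ ξ‖ ≤ M) ∧
        ∀ ξ, ∀ ρ : C(K, ℝ) →L[ℝ] ℝ,
          (∀ a, ∀ ha : a ∈ A0, ρ (chi a (hA0 a ha)) = ψ ξ (chi a (hA0 a ha))) →
          ∀ l : (Cardinal.aleph 1).ord.ToType,
            ρ (T (chi (e {l}) (heclopen _ (hBfin _ (Set.finite_singleton l))))) =
              if l = ξ then 1 else 0 :=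
  stmt14_general B hBcompl hBfin L e heclopen heinj heunion hecompl K T M hT
end
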